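/- Let a ∈ ℝ. The following are equivalent: (i) there exists a smooth 2π-periodic function f: ℝ → ℝ, not a linear combination of 1, cos 2t, sin 2t, such that the associated bilinear form vanishes against all variations, i.e. ∫₀^{2π} ( (2a−1) f'g' − ((4a−3)/4) f''g'' + ((a−1)/8) f'''g''' ) dt = 0 for every smooth 2π-periodic g: ℝ → ℝ; (ii) there exists a positive integer k with k ≠ 2 such that a = (k² − 2)/(k² − 4). That is, the Hessian of ℬ_a at the circle is degenerate (beyond the trivial SL(2,ℝ)-directions) exactly for a in the sequence 1/3, 7/5, 7/6, 23/21, … = (k²−2)/(k²−4), which converges to 1. -/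

import Mathlib

open Real


open scoped ContDiff

lemma hasDerivAt_cos_mul' (k t : ℝ) :
    HasDerivAt (fun s => Real.cos (k * s)) (-k * Real.sin (k * t)) t := by
  have := (Real.hasDerivAt_cos (k * t)).comp t ((hasDerivAt_id t).const_mul k)
  simpa [mul_comm, Function.comp_def] using this

lemma hasDerivAt_sin_mul' (k t : ℝ) :
    HasDerivAt (fun s => Real.sin (k * s)) (k * Real.cos (k * t)) t := by
  have := (Real.hasDerivAt_sin (k * t)).comp t ((hasDerivAt_id t).const_mul k)
  simpa [mul_comm, Function.comp_def] using this

lemma deriv_cos_mul (k : ℝ) :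
    deriv (fun s => Real.cos (k * s)) = fun t => -k * Real.sin (k * t) :=
  funext fun t => (hasDerivAt_cos_mul' k t).deriv

lemma deriv2_cos_mul (k : ℝ) :
    deriv (deriv (fun s => Real.cos (k * s))) = fun t => -k * (k * Real.cos (k * t)) := by
  rw [deriv_cos_mul]
  exact funext fun t => ((hasDerivAt_sin_mul' k t).const_mul (-k)).deriv

lemma deriv3_cos_mul (k : ℝ) :
    deriv (deriv (deriv (fun s => Real.cos (k * s))))
      = fun t => -k * (k * (-k * Real.sin (k * t))) := by
  rw [deriv2_cos_mul]
  exact funext fun t => (((hasDerivAt_cos_mul' k t).const_mul k).const_mul (-k)).deriv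

lemma deriv_sin_mul (k : ℝ) :
    deriv (fun s => Real.sin (k * s)) = fun t => k * Real.cos (k * t) :=
  funext fun t => (hasDerivAt_sin_mul' k t).deriv

lemma deriv2_sin_mul (k : ℝ) :
    deriv (deriv (fun s => Real.sin (k * s))) = fun t => k * (-k * Real.sin (k * t)) := by
  rw [deriv_sin_mul]
  exact funext fun t => ((hasDerivAt_cos_mul' k t).const_mul k).deriv

lemma deriv3_sin_mul (k : ℝ) :
    deriv (deriv (deriv (fun s => Real.sin (k * s))))
      = fun t => k * (-k * (k * Real.cos (k * t))) := by
  rw [deriv2_sin_mul]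
  exact funext fun t => (((hasDerivAt_sin_mul' k t).const_mul (-k)).const_mul k).deriv

lemma contDiff_cos_mul (k : ℝ) : ContDiff ℝ (⊤ : ℕ∞) (fun s => Real.cos (k * s)) :=
  Real.contDiff_cos.comp (contDiff_const.mul contDiff_id)

lemma contDiff_sin_mul (k : ℝ) : ContDiff ℝ (⊤ : ℕ∞) (fun s => Real.sin (k * s)) :=
  Real.contDiff_sin.comp (contDiff_const.mul contDiff_id)

lemma sin_nat_two_pi' (k : ℕ) : Real.sin ((k:ℝ) * (2*π)) = 0 := by
  have : (k:ℝ) * (2*π) = ((2*k : ℕ) : ℝ) * π := by push_cast; ring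
  rw [this, Real.sin_nat_mul_pi]

lemma periodic_cos_mul (k : ℕ) : Function.Periodic (fun s => Real.cos ((k:ℝ) * s)) (2*π) := by
  intro t
  simp only [mul_add, Real.cos_add, Real.cos_nat_mul_two_pi, sin_nat_two_pi']
  ring

lemma periodic_sin_mul (k : ℕ) : Function.Periodic (fun s => Real.sin ((k:ℝ) * s)) (2*π) := by
  intro t
  simp only [mul_add, Real.sin_add, Real.cos_nat_mul_two_pi, sin_nat_two_pi']
  ring

lemma cos_mul_not_trivial (k : ℕ) (hk : 0 < k) (hk2 : k ≠ 2) :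
    ¬ (∃ c₀ c₁ c₂ : ℝ, (fun t => Real.cos ((k:ℝ) * t))
        = fun t => c₀ + c₁ * Real.cos (2 * t) + c₂ * Real.sin (2 * t)) := by
  rintro ⟨c₀, c₁, c₂, h⟩
  have hr1 : deriv (fun t => c₀ + c₁ * Real.cos (2 * t) + c₂ * Real.sin (2 * t))
      = fun t => c₁ * (-2 * Real.sin (2 * t)) + c₂ * (2 * Real.cos (2 * t)) := by
    funext t
    have := (((hasDerivAt_const t c₀).add ((hasDerivAt_cos_mul' 2 t).const_mul c₁)).add
      ((hasDerivAt_sin_mul' 2 t).const_mul c₂)).deriv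
    erw [this]; ring
  have hr3 : deriv (deriv (deriv (fun t => c₀ + c₁ * Real.cos (2 * t) + c₂ * Real.sin (2 * t))))
      = fun t => c₁ * (8 * Real.sin (2 * t)) + c₂ * (-8 * Real.cos (2 * t)) := by
    rw [hr1]
    have hr2 : deriv (fun t => c₁ * (-2 * Real.sin (2 * t)) + c₂ * (2 * Real.cos (2 * t)))
        = fun t => c₁ * (-4 * Real.cos (2 * t)) + c₂ * (-4 * Real.sin (2 * t)) := by
      funext t
      have := ((((hasDerivAt_sin_mul' 2 t).const_mul (-2:ℝ)).const_mul c₁).add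
        (((hasDerivAt_cos_mul' 2 t).const_mul (2:ℝ)).const_mul c₂)).deriv
      erw [this]; ring
    rw [hr2]
    funext t
    have := ((((hasDerivAt_cos_mul' 2 t).const_mul (-4:ℝ)).const_mul c₁).add
      (((hasDerivAt_sin_mul' 2 t).const_mul (-4:ℝ)).const_mul c₂)).deriv
    erw [this]; ring
  have h1 := congrArg deriv h
  have h3 := congrArg deriv (congrArg deriv h1)
  rw [deriv_cos_mul, hr1] at h1
  rw [deriv3_cos_mul, hr3] at h3
  -- combine: f''' + 4 f' = 0 identity on RHS
  have key : ∀ t : ℝ, ((k:ℝ)^3 - 4*k) * Real.sin ((k:ℝ)*t) = 0 := by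
    intro t
    have e1 := congrFun h1 t
    have e3 := congrFun h3 t
    have : -(k:ℝ) * ((k:ℝ) * (-(k:ℝ) * Real.sin ((k:ℝ)*t))) + 4 * (-(k:ℝ) * Real.sin ((k:ℝ)*t))
        = (c₁ * (8 * Real.sin (2*t)) + c₂ * (-8 * Real.cos (2*t)))
          + 4 * (c₁ * (-2 * Real.sin (2*t)) + c₂ * (2 * Real.cos (2*t))) := by
      rw [← e1, ← e3]
    nlinarith [this]
  have := key (π / (2*(k:ℝ)))
  have hk0 : (k:ℝ) ≠ 0 := Nat.cast_ne_zero.mpr hk.ne'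
  rw [show (k:ℝ) * (π / (2*(k:ℝ))) = π/2 by field_simp, Real.sin_pi_div_two, mul_one] at this
  have hkr : (k:ℝ)^2 = 4 := by
    have : (k:ℝ) * ((k:ℝ)^2 - 4) = 0 := by ring_nf; ring_nf at this; linarith
    rcases mul_eq_zero.mp this with h | h
    · exact absurd h hk0
    · linarith
  have : (k:ℝ) = 2 := by nlinarith [Nat.cast_nonneg (α := ℝ) k]
  exact hk2 (by exact_mod_cast this)

lemma smooth_deriv {φ : ℝ → ℝ} (hφ : ContDiff ℝ ∞ φ) : ContDiff ℝ ∞ (deriv φ) :=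
  (contDiff_infty_iff_deriv.mp hφ).2

lemma periodic_deriv' {f : ℝ → ℝ} {c : ℝ} (h : Function.Periodic f c) :
    Function.Periodic (deriv f) c := by
  intro x
  rw [← deriv_comp_add_const]
  congr 1
  funext y
  exact h y

-- sine version
lemma core_sin {φ : ℝ → ℝ} (hφ : ContDiff ℝ ∞ φ) (hper : Function.Periodic φ (2*π))
    (k : ℕ) (α β γ : ℝ) :
    ∫ t in (0:ℝ)..(2*π),
      (α * deriv φ t * Real.sin (k*t) + β * deriv (deriv φ) t * Real.cos (k*t)
        + γ * deriv (deriv (deriv φ)) t * Real.sin (k*t))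
      = (α + k*β - k^2*γ) * ∫ t in (0:ℝ)..(2*π), deriv φ t * Real.sin (k*t) := by
  have h1 : ContDiff ℝ ∞ (deriv φ) := smooth_deriv hφ
  have h2 : ContDiff ℝ ∞ (deriv (deriv φ)) := smooth_deriv h1
  have h3 : ContDiff ℝ ∞ (deriv (deriv (deriv φ))) := smooth_deriv h2
  have hc1 := h1.continuous; have hc2 := h2.continuous; have hc3 := h3.continuous
  set G : ℝ → ℝ := fun t => (β - k*γ) * (deriv φ t * Real.cos (k*t))
      + γ * (deriv (deriv φ) t * Real.sin (k*t)) with hG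
  set G' : ℝ → ℝ := fun t =>
      (β - k*γ) * (deriv (deriv φ) t * Real.cos (k*t) + deriv φ t * (-k * Real.sin (k*t)))
      + γ * (deriv (deriv (deriv φ)) t * Real.sin (k*t) + deriv (deriv φ) t * (k * Real.cos (k*t)))
    with hG'
  have hd : ∀ t, HasDerivAt G (G' t) t := by
    intro t
    exact (((h1.differentiable (by norm_num) t).hasDerivAt.mul (hasDerivAt_cos_mul' k t)).const_mul _).add
      (((h2.differentiable (by norm_num) t).hasDerivAt.mul (hasDerivAt_sin_mul' k t)).const_mul _)
  have hG'cont : Continuous G' := by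
    rw [hG']; fun_prop
  have hint : ∫ t in (0:ℝ)..(2*π), G' t = 0 := by
    rw [intervalIntegral.integral_eq_sub_of_hasDerivAt (fun t _ => hd t)
      (hG'cont.intervalIntegrable _ _)]
    have e1 : deriv φ (2*π) = deriv φ 0 := by simpa using (periodic_deriv' hper) 0
    have e2 : deriv (deriv φ) (2*π) = deriv (deriv φ) 0 := by
      simpa using (periodic_deriv' (periodic_deriv' hper)) 0
    simp [hG, e1, e2, Real.cos_nat_mul_two_pi, sin_nat_two_pi']
  have key : (fun t => α * deriv φ t * Real.sin (k*t) + β * deriv (deriv φ) t * Real.cos (k*t)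
        + γ * deriv (deriv (deriv φ)) t * Real.sin (k*t))
      = fun t => (α + k*β - k^2*γ) * (deriv φ t * Real.sin (k*t)) + G' t := by
    funext t; simp only [hG']; ring
  have hi1 : IntervalIntegrable (fun t => (α + k*β - k^2*γ) * (deriv φ t * Real.sin (k*t)))
      MeasureTheory.volume 0 (2*π) :=
    ((by fun_prop : Continuous (fun t => (α + k*β - k^2*γ) * (deriv φ t * Real.sin (k*t))))).intervalIntegrable _ _
  rw [key, intervalIntegral.integral_add hi1 (hG'cont.intervalIntegrable _ _),
    hint, add_zero, intervalIntegral.integral_const_mul]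

-- cosine version
lemma core_cos {φ : ℝ → ℝ} (hφ : ContDiff ℝ ∞ φ) (hper : Function.Periodic φ (2*π))
    (k : ℕ) (α β γ : ℝ) :
    ∫ t in (0:ℝ)..(2*π),
      (α * deriv φ t * Real.cos (k*t) + β * deriv (deriv φ) t * Real.sin (k*t)
        + γ * deriv (deriv (deriv φ)) t * Real.cos (k*t))
      = (α - k*β - k^2*γ) * ∫ t in (0:ℝ)..(2*π), deriv φ t * Real.cos (k*t) := by
  have h1 : ContDiff ℝ ∞ (deriv φ) := smooth_deriv hφ
  have h2 : ContDiff ℝ ∞ (deriv (deriv φ)) := smooth_deriv h1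
  have h3 : ContDiff ℝ ∞ (deriv (deriv (deriv φ))) := smooth_deriv h2
  have hc1 := h1.continuous; have hc2 := h2.continuous; have hc3 := h3.continuous
  set G : ℝ → ℝ := fun t => (β + k*γ) * (deriv φ t * Real.sin (k*t))
      + γ * (deriv (deriv φ) t * Real.cos (k*t)) with hG
  set G' : ℝ → ℝ := fun t =>
      (β + k*γ) * (deriv (deriv φ) t * Real.sin (k*t) + deriv φ t * (k * Real.cos (k*t)))
      + γ * (deriv (deriv (deriv φ)) t * Real.cos (k*t) + deriv (deriv φ) t * (-k * Real.sin (k*t)))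
    with hG'
  have hd : ∀ t, HasDerivAt G (G' t) t := by
    intro t
    exact (((h1.differentiable (by norm_num) t).hasDerivAt.mul (hasDerivAt_sin_mul' k t)).const_mul _).add
      (((h2.differentiable (by norm_num) t).hasDerivAt.mul (hasDerivAt_cos_mul' k t)).const_mul _)
  have hG'cont : Continuous G' := by
    rw [hG']; fun_prop
  have hint : ∫ t in (0:ℝ)..(2*π), G' t = 0 := by
    rw [intervalIntegral.integral_eq_sub_of_hasDerivAt (fun t _ => hd t)
      (hG'cont.intervalIntegrable _ _)]
    have e1 : deriv φ (2*π) = deriv φ 0 := by simpa using (periodic_deriv' hper) 0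
    have e2 : deriv (deriv φ) (2*π) = deriv (deriv φ) 0 := by
      simpa using (periodic_deriv' (periodic_deriv' hper)) 0
    simp [hG, e1, e2, Real.cos_nat_mul_two_pi, sin_nat_two_pi']
  have key : (fun t => α * deriv φ t * Real.cos (k*t) + β * deriv (deriv φ) t * Real.sin (k*t)
        + γ * deriv (deriv (deriv φ)) t * Real.cos (k*t))
      = fun t => (α - k*β - k^2*γ) * (deriv φ t * Real.cos (k*t)) + G' t := by
    funext t; simp only [hG']; ring
  have hi1 : IntervalIntegrable (fun t => (α - k*β - k^2*γ) * (deriv φ t * Real.cos (k*t)))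
      MeasureTheory.volume 0 (2*π) :=
    ((by fun_prop : Continuous (fun t => (α - k*β - k^2*γ) * (deriv φ t * Real.cos (k*t))))).intervalIntegrable _ _
  rw [key, intervalIntegral.integral_add hi1 (hG'cont.intervalIntegrable _ _),
    hint, add_zero, intervalIntegral.integral_const_mul]

lemma fourier_step {u : ℝ → ℝ} (hc : Continuous u) (hper : Function.Periodic u (2*π))
    (hsin : ∀ k : ℕ, k ≠ 2 → ∫ t in (0:ℝ)..(2*π), u t * Real.sin (k*t) = 0)
    (hcos : ∀ k : ℕ, k ≠ 2 → ∫ t in (0:ℝ)..(2*π), u t * Real.cos (k*t) = 0) :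
    ∃ p q : ℝ, ∀ t, u t = p * Real.cos (2*t) + q * Real.sin (2*t) := by
  haveI : Fact (0 < 2*π) := ⟨by positivity⟩
  set w : ℝ → ℂ := fun t => (u t : ℂ) with hw
  have wper : Function.Periodic w (2*π) := fun t => by simp [hw, hper t]
  have wcont : Continuous (wper.lift) := by
    rw [isQuotientMap_quotient_mk'.continuous_iff]
    exact Complex.continuous_ofReal.comp hc
  set W : C(AddCircle (2*π), ℂ) := ⟨wper.lift, wcont⟩ with hW
  -- compute coefficients
  have coeff : ∀ n : ℤ, fourierCoeff (W : AddCircle (2*π) → ℂ) n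
      = (1/(2*π) : ℝ) • ((∫ t in (0:ℝ)..(2*π), u t * Real.cos (n*t) : ℝ)
          - Complex.I * (∫ t in (0:ℝ)..(2*π), u t * Real.sin (n*t) : ℝ)) := by
    intro n
    rw [fourierCoeff_eq_intervalIntegral _ n 0]
    rw [zero_add]
    congr 1
    have : ∀ t : ℝ, (fourier (-n) (t : AddCircle (2*π))) • (W (t : AddCircle (2*π)))
        = ((u t * Real.cos (n*t) : ℝ) : ℂ) - Complex.I * ((u t * Real.sin (n*t) : ℝ) : ℂ) := by
      intro t
      have h1 : (fourier (-n) (t : AddCircle (2*π))) = Complex.exp ((-(n*t) : ℝ) * Complex.I) := by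
        rw [fourier_coe_apply]
        congr 1
        push_cast
        have hπ : (π:ℂ) ≠ 0 := Complex.ofReal_ne_zero.mpr pi_ne_zero
        field_simp
      have h2 : W (t : AddCircle (2*π)) = (u t : ℂ) := by
        simp [hW, Function.Periodic.lift_coe, hw]
      rw [smul_eq_mul, h1, h2, Complex.exp_mul_I]
      have hnt : ((-(n*t):ℝ) : ℂ) = -((n:ℂ) * (t:ℂ)) := by push_cast; ring
      rw [hnt, Complex.cos_neg, Complex.sin_neg]
      have e1 : Complex.cos ((n:ℂ) * t) = ((Real.cos (n*t) : ℝ) : ℂ) := by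
        rw [Complex.ofReal_cos]; push_cast; ring_nf
      have e2 : Complex.sin ((n:ℂ) * t) = ((Real.sin (n*t) : ℝ) : ℂ) := by
        rw [Complex.ofReal_sin]; push_cast; ring_nf
      rw [e1, e2]
      push_cast
      ring
    simp_rw [this]
    have i1 : IntervalIntegrable (fun t => ((u t * Real.cos (n*t) : ℝ) : ℂ))
        MeasureTheory.volume 0 (2*π) :=
      (Complex.continuous_ofReal.comp (hc.mul (Real.continuous_cos.comp (by fun_prop)))).intervalIntegrable _ _
    have i2 : IntervalIntegrable (fun t => Complex.I * ((u t * Real.sin (n*t) : ℝ) : ℂ))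
        MeasureTheory.volume 0 (2*π) :=
      (continuous_const.mul (Complex.continuous_ofReal.comp
        (hc.mul (Real.continuous_sin.comp (by fun_prop))))).intervalIntegrable _ _
    rw [intervalIntegral.integral_sub i1 i2,
      intervalIntegral.integral_ofReal, intervalIntegral.integral_const_mul,
      intervalIntegral.integral_ofReal]
  set c : ℤ → ℂ := fun n => fourierCoeff (W : AddCircle (2*π) → ℂ) n with hcdef
  have hvan : ∀ n : ℤ, n ∉ ({-2, 2} : Finset ℤ) → c n = 0 := by
    intro n hn
    simp only [Finset.mem_insert, Finset.mem_singleton] at hn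
    push_neg at hn
    obtain ⟨hn2, hn2'⟩ := hn
    have hk2 : (n.natAbs : ℕ) ≠ 2 := by
      intro h
      rcases Int.natAbs_eq n with h' | h' <;> rw [h, Nat.cast_ofNat] at h' <;> omega
    rcases Int.natAbs_eq n with h' | h'
    · have hrc : ∀ t : ℝ, (n:ℝ) * t = (n.natAbs : ℝ) * t := by
        intro t
        have : (n:ℝ) = (n.natAbs : ℝ) := by rw [h']; simp [Nat.cast_natAbs, Int.cast_abs, abs_abs]
        rw [this]
      rw [hcdef]
      simp only [coeff n]
      simp_rw [hrc]
      rw [hsin _ hk2, hcos _ hk2]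
      simp
    · have hrc : ∀ t : ℝ, (n:ℝ) * t = -((n.natAbs : ℝ) * t) := by
        intro t
        have : (n:ℝ) = -(n.natAbs : ℝ) := by rw [h']; simp [Nat.cast_natAbs, Int.cast_abs, abs_abs]
        rw [this]; ring
      rw [hcdef]
      simp only [coeff n]
      have e1 : ∫ t in (0:ℝ)..(2*π), u t * Real.cos ((n:ℝ)*t)
          = ∫ t in (0:ℝ)..(2*π), u t * Real.cos ((n.natAbs:ℝ)*t) := by
        congr 1; funext t; rw [hrc t, Real.cos_neg]
      have e2 : ∫ t in (0:ℝ)..(2*π), u t * Real.sin ((n:ℝ)*t)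
          = -∫ t in (0:ℝ)..(2*π), u t * Real.sin ((n.natAbs:ℝ)*t) := by
        rw [← intervalIntegral.integral_neg]; congr 1; funext t; rw [hrc t, Real.sin_neg]; ring
      rw [e1, e2, hsin _ hk2, hcos _ hk2]
      simp
  have hsummable : Summable c := summable_of_ne_finset_zero hvan
  have hsum1 : HasSum (fun i => c i • fourier (T := 2*π) i) W :=
    hasSum_fourier_series_of_summable hsummable
  have hsum2 : HasSum (fun i => c i • fourier (T := 2*π) i)
      (∑ i ∈ ({-2, 2} : Finset ℤ), c i • fourier i) :=
    hasSum_sum_of_ne_finset_zero (by intro n hn; rw [hvan n hn, zero_smul])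
  have hWeq : W = c (-2) • fourier (-2) + c 2 • fourier 2 := by
    rw [hsum1.unique hsum2]
    simp [Finset.sum_insert, Finset.sum_singleton]
  have fe : ∀ (n : ℤ) (t : ℝ), (fourier n (t : AddCircle (2*π)) : ℂ)
      = ((Real.cos (n*t) : ℝ):ℂ) + ((Real.sin (n*t):ℝ):ℂ) * Complex.I := by
    intro n t
    have h1 : (fourier n (t : AddCircle (2*π))) = Complex.exp (((n*t : ℝ)) * Complex.I) := by
      rw [fourier_coe_apply]
      congr 1
      push_cast
      have hπ : (π:ℂ) ≠ 0 := Complex.ofReal_ne_zero.mpr pi_ne_zero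
      field_simp
    rw [h1, Complex.exp_mul_I, ← Complex.ofReal_cos, ← Complex.ofReal_sin]
  refine ⟨(c (-2)).re + (c 2).re, (c (-2)).im - (c 2).im, fun t => ?_⟩
  have E : (u t : ℂ) = c (-2) * (fourier (-2) (t : AddCircle (2*π))) +
      c 2 * (fourier 2 (t : AddCircle (2*π))) := by
    have := congrArg (fun (F : C(AddCircle (2*π), ℂ)) => F (t : AddCircle (2*π))) hWeq
    simpa [hW, Function.Periodic.lift_coe, hw] using this
  rw [fe, fe] at E
  have E' := congrArg Complex.re E
  simp only [Complex.ofReal_re, Complex.add_re, Complex.mul_re, Complex.ofReal_im,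
    Complex.add_im, Complex.mul_im, Complex.I_re, Complex.I_im] at E'
  have c1 : Real.cos (((-2 : ℤ) : ℝ) * t) = Real.cos (2*t) := by push_cast; rw [neg_mul, Real.cos_neg]
  have s1 : Real.sin (((-2 : ℤ) : ℝ) * t) = -Real.sin (2*t) := by push_cast; rw [neg_mul, Real.sin_neg]
  have c2 : Real.cos (((2 : ℤ) : ℝ) * t) = Real.cos (2*t) := by norm_num
  have s2 : Real.sin (((2 : ℤ) : ℝ) * t) = Real.sin (2*t) := by norm_num
  rw [c1, s1, c2, s2] at E'
  rw [E']
  ring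

lemma ksq_ne (k : ℕ) (hk2 : k ≠ 2) : ((k:ℝ)^2 - 4) ≠ 0 := by
  intro h
  have h2 : (k:ℝ)^2 = 4 := by linarith
  have : (k:ℝ) = 2 := by nlinarith [Nat.cast_nonneg (α := ℝ) k]
  exact hk2 (by exact_mod_cast this)

lemma factor_ne (a : ℝ) (k : ℕ) (hk : 0 < k) (hk2 : k ≠ 2)
    (hnot : a ≠ ((k:ℝ)^2 - 2)/((k:ℝ)^2 - 4)) :
    (k:ℝ) * ((((k:ℝ)^2 - 4) * ((a-1)*(k:ℝ)^2 - 2*(2*a-1)))) ≠ 0 := by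
  have hk0 : (k:ℝ) ≠ 0 := Nat.cast_ne_zero.mpr hk.ne'
  have h4 := ksq_ne k hk2
  refine mul_ne_zero hk0 (mul_ne_zero h4 ?_)
  intro h
  apply hnot
  rw [eq_div_iff h4]
  linarith [h]

lemma deriv_ncml (k : ℝ) :
    deriv (fun t => -k * Real.sin (k * t)) = fun t => -k * (k * Real.cos (k * t)) :=
  funext fun t => ((hasDerivAt_sin_mul' k t).const_mul (-k)).deriv

lemma deriv_ncml2 (k : ℝ) :
    deriv (fun t => -k * (k * Real.cos (k * t))) = fun t => -k * (k * (-k * Real.sin (k * t))) :=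
  funext fun t => (((hasDerivAt_cos_mul' k t).const_mul k).const_mul (-k)).deriv

lemma deriv_nsml (k : ℝ) :
    deriv (fun t => k * Real.cos (k * t)) = fun t => k * (-k * Real.sin (k * t)) :=
  funext fun t => ((hasDerivAt_cos_mul' k t).const_mul k).deriv

lemma deriv_nsml2 (k : ℝ) :
    deriv (fun t => k * (-k * Real.sin (k * t))) = fun t => k * (-k * (k * Real.cos (k * t))) :=
  funext fun t => (((hasDerivAt_sin_mul' k t).const_mul (-k)).const_mul k).deriv


/-- The Hessian of `ℬ_a` at the circle is degenerate beyond the trivial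
`SL(2,ℝ)`-directions — i.e. there is a smooth `2π`-periodic `f`, not a linear
combination of `1, cos 2t, sin 2t`, on which the second-variation bilinear
form vanishes against all smooth `2π`-periodic variations — exactly when
`a = (k²−2)/(k²−4)` for some positive integer `k ≠ 2`. -/
theorem hessian_degenerate_iff (a : ℝ) :
    (∃ f : ℝ → ℝ, ContDiff ℝ (⊤ : ℕ∞) f ∧ Function.Periodic f (2 * π) ∧
      ¬ (∃ c₀ c₁ c₂ : ℝ, f = fun t => c₀ + c₁ * Real.cos (2 * t) + c₂ * Real.sin (2 * t)) ∧
      ∀ g : ℝ → ℝ, ContDiff ℝ (⊤ : ℕ∞) g → Function.Periodic g (2 * π) →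
        (∫ t in (0:ℝ)..(2 * π),
          ((2 * a - 1) * deriv f t * deriv g t -
            (4 * a - 3) / 4 * deriv (deriv f) t * deriv (deriv g) t +
            (a - 1) / 8 * deriv (deriv (deriv f)) t * deriv (deriv (deriv g)) t)) = 0) ↔
    (∃ k : ℕ, 0 < k ∧ k ≠ 2 ∧ a = ((k : ℝ)^2 - 2) / ((k : ℝ)^2 - 4)) := by
  constructor
  · rintro ⟨f, hf, hper, hnt, hB⟩
    by_contra hnot
    push_neg at hnot
    apply hnt
    have hf' : ContDiff ℝ ∞ f := hf.of_le (by simp)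
    -- vanishing of Fourier coefficients
    have hsin : ∀ k : ℕ, k ≠ 2 → ∫ t in (0:ℝ)..(2*π), deriv f t * Real.sin ((k:ℝ)*t) = 0 := by
      intro k hk2
      rcases Nat.eq_zero_or_pos k with hk0 | hkpos
      · subst hk0; simp
      · have h0 := hB (fun t => Real.cos ((k:ℝ)*t)) (contDiff_cos_mul (k:ℝ)) (periodic_cos_mul k)
        simp only [deriv_cos_mul, deriv_ncml, deriv_ncml2] at h0
        have heq : ∫ t in (0:ℝ)..(2*π),
            ((2 * a - 1) * deriv f t * (-(k:ℝ) * Real.sin ((k:ℝ)*t)) -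
              (4 * a - 3) / 4 * deriv (deriv f) t * (-(k:ℝ) * ((k:ℝ) * Real.cos ((k:ℝ)*t))) +
              (a - 1) / 8 * deriv (deriv (deriv f)) t * (-(k:ℝ) * ((k:ℝ) * (-(k:ℝ) * Real.sin ((k:ℝ)*t)))))
            = ∫ t in (0:ℝ)..(2*π),
            ((-(k:ℝ)*(2*a-1)) * deriv f t * Real.sin ((k:ℝ)*t)
              + ((4*a-3)/4*(k:ℝ)^2) * deriv (deriv f) t * Real.cos ((k:ℝ)*t)
              + ((a-1)/8*(k:ℝ)^3) * deriv (deriv (deriv f)) t * Real.sin ((k:ℝ)*t)) :=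
          intervalIntegral.integral_congr (fun t _ => by ring)
        rw [heq, core_sin hf' hper k _ _ _] at h0
        have hμ : ((-(k:ℝ)*(2*a-1)) + (k:ℝ)*((4*a-3)/4*(k:ℝ)^2) - (k:ℝ)^2*((a-1)/8*(k:ℝ)^3)) ≠ 0 := by
          intro h
          apply factor_ne a k hkpos hk2 (hnot k hkpos hk2)
          have : (k:ℝ) * ((((k:ℝ)^2 - 4) * ((a-1)*(k:ℝ)^2 - 2*(2*a-1))))
              = -8 * ((-(k:ℝ)*(2*a-1)) + (k:ℝ)*((4*a-3)/4*(k:ℝ)^2) - (k:ℝ)^2*((a-1)/8*(k:ℝ)^3)) := by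
            ring
          rw [this, h, mul_zero]
        exact (mul_eq_zero.mp h0).resolve_left hμ
    have hcos : ∀ k : ℕ, k ≠ 2 → ∫ t in (0:ℝ)..(2*π), deriv f t * Real.cos ((k:ℝ)*t) = 0 := by
      intro k hk2
      rcases Nat.eq_zero_or_pos k with hk0 | hkpos
      · subst hk0
        simp only [Nat.cast_zero, zero_mul, Real.cos_zero, mul_one]
        rw [intervalIntegral.integral_eq_sub_of_hasDerivAt
          (fun t _ => (hf.differentiable (by simp) t).hasDerivAt)
          (((smooth_deriv hf').continuous).intervalIntegrable _ _)]
        have := hper 0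
        simp only [zero_add] at this
        rw [this, sub_self]
      · have h0 := hB (fun t => Real.sin ((k:ℝ)*t)) (contDiff_sin_mul (k:ℝ)) (periodic_sin_mul k)
        simp only [deriv_sin_mul, deriv_nsml, deriv_nsml2] at h0
        have heq : ∫ t in (0:ℝ)..(2*π),
            ((2 * a - 1) * deriv f t * ((k:ℝ) * Real.cos ((k:ℝ)*t)) -
              (4 * a - 3) / 4 * deriv (deriv f) t * ((k:ℝ) * (-(k:ℝ) * Real.sin ((k:ℝ)*t))) +
              (a - 1) / 8 * deriv (deriv (deriv f)) t * ((k:ℝ) * (-(k:ℝ) * ((k:ℝ) * Real.cos ((k:ℝ)*t)))))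
            = ∫ t in (0:ℝ)..(2*π),
            (((k:ℝ)*(2*a-1)) * deriv f t * Real.cos ((k:ℝ)*t)
              + ((4*a-3)/4*(k:ℝ)^2) * deriv (deriv f) t * Real.sin ((k:ℝ)*t)
              + (-(a-1)/8*(k:ℝ)^3) * deriv (deriv (deriv f)) t * Real.cos ((k:ℝ)*t)) :=
          intervalIntegral.integral_congr (fun t _ => by ring)
        rw [heq, core_cos hf' hper k _ _ _] at h0
        have hμ : (((k:ℝ)*(2*a-1)) - (k:ℝ)*((4*a-3)/4*(k:ℝ)^2) - (k:ℝ)^2*(-(a-1)/8*(k:ℝ)^3)) ≠ 0 := by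
          intro h
          apply factor_ne a k hkpos hk2 (hnot k hkpos hk2)
          have : (k:ℝ) * ((((k:ℝ)^2 - 4) * ((a-1)*(k:ℝ)^2 - 2*(2*a-1))))
              = 8 * (((k:ℝ)*(2*a-1)) - (k:ℝ)*((4*a-3)/4*(k:ℝ)^2) - (k:ℝ)^2*(-(a-1)/8*(k:ℝ)^3)) := by
            ring
          rw [this, h, mul_zero]
        exact (mul_eq_zero.mp h0).resolve_left hμ
    obtain ⟨p, q, hpq⟩ := fourier_step (smooth_deriv hf').continuous (periodic_deriv' hper) hsin hcos
    -- reconstruct f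
    refine ⟨f 0 + q/2, -q/2, p/2, funext fun t => ?_⟩
    set r : ℝ → ℝ := fun t => (f 0 + q/2) + (-q/2) * Real.cos (2*t) + (p/2) * Real.sin (2*t) with hr
    have hdr : ∀ t, HasDerivAt r (p * Real.cos (2*t) + q * Real.sin (2*t)) t := by
      intro t
      have := ((hasDerivAt_const t (f 0 + q/2)).add
          ((hasDerivAt_cos_mul' 2 t).const_mul (-q/2))).add
          ((hasDerivAt_sin_mul' 2 t).const_mul (p/2))
      exact this.congr_deriv (by ring)
    have hD : Differentiable ℝ (fun t => f t - r t) :=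
      (hf.differentiable (by simp)).sub (fun t => (hdr t).differentiableAt)
    have hD' : ∀ t, deriv (fun t => f t - r t) t = 0 := by
      intro t
      rw [deriv_fun_sub (hf.differentiable (by simp) t) (hdr t).differentiableAt, (hdr t).deriv, hpq t]
      ring
    have hconst := is_const_of_deriv_eq_zero hD hD' t 0
    have hr0 : r 0 = f 0 := by simp [hr]; ring
    have : f t - r t = f 0 - r 0 := hconst
    rw [hr0, sub_self, sub_eq_zero] at this
    rw [this, hr]
  · rintro ⟨k, hk, hk2, ha⟩
    refine ⟨fun t => Real.cos ((k:ℝ)*t), contDiff_cos_mul (k:ℝ), periodic_cos_mul k,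
      cos_mul_not_trivial k hk hk2, ?_⟩
    intro g hg hgper
    simp only [deriv_cos_mul, deriv_ncml, deriv_ncml2]
    have heq : ∫ t in (0:ℝ)..(2*π),
        ((2 * a - 1) * (-(k:ℝ) * Real.sin ((k:ℝ)*t)) * deriv g t -
          (4 * a - 3) / 4 * (-(k:ℝ) * ((k:ℝ) * Real.cos ((k:ℝ)*t))) * deriv (deriv g) t +
          (a - 1) / 8 * (-(k:ℝ) * ((k:ℝ) * (-(k:ℝ) * Real.sin ((k:ℝ)*t)))) * deriv (deriv (deriv g)) t)
        = ∫ t in (0:ℝ)..(2*π),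
        ((-(k:ℝ)*(2*a-1)) * deriv g t * Real.sin ((k:ℝ)*t)
          + ((4*a-3)/4*(k:ℝ)^2) * deriv (deriv g) t * Real.cos ((k:ℝ)*t)
          + ((a-1)/8*(k:ℝ)^3) * deriv (deriv (deriv g)) t * Real.sin ((k:ℝ)*t)) :=
      intervalIntegral.integral_congr (fun t _ => by ring)
    rw [heq, core_sin (hg.of_le (by simp)) hgper k _ _ _]
    have hcoef : ((-(k:ℝ)*(2*a-1)) + (k:ℝ)*((4*a-3)/4*(k:ℝ)^2) - (k:ℝ)^2*((a-1)/8*(k:ℝ)^3)) = 0 := by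
      have h4 := ksq_ne k hk2
      rw [ha]
      field_simp
      ring
    rw [hcoef, zero_mul]
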